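/- For n ≥ 2, the (n+1)-th higher Arguesian law Dₙ₊₁ implies the n-th law Dₙ. Here Dₙ is the identity: aₙ ∧ ((⋀_{i=1}^{n-1}(aᵢ ∨ bᵢ)) ∨ bₙ) ≤ a₁ ∨ ((⋁_{i=1}^{n-1}((aᵢ ∨ aᵢ₊₁) ∧ (bᵢ ∨ bᵢ₊₁))) ∧ (b₁ ∨ bₙ)) for all a₁,…,aₙ, b₁,…,bₙ in the lattice. That is, if a lattice satisfies Dₙ₊₁, then it satisfies Dₙ (via the substitution a₁ = a₂, b₁ = b₂). -/
import Mathlib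


/-- The `n`-th higher Arguesian law `Dₙ` (for `n ≥ 2`):
`aₙ ⊓ ((⨅_{i=1}^{n-1} (aᵢ ⊔ bᵢ)) ⊔ bₙ) ≤ a₁ ⊔ ((⨆_{i=1}^{n-1} ((aᵢ ⊔ aᵢ₊₁) ⊓ (bᵢ ⊔ bᵢ₊₁))) ⊓ (b₁ ⊔ bₙ))`. -/
def HigherArguesian (L : Type*) [Lattice L] (n : ℕ) (hn : 2 ≤ n) : Prop :=
  ∀ a b : ℕ → L,
    a n ⊓ ((Finset.Icc 1 (n - 1)).inf'
        (Finset.nonempty_Icc.mpr (Nat.one_le_iff_ne_zero.mpr (by omega)))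
        (fun i => a i ⊔ b i) ⊔ b n) ≤
      a 1 ⊔ ((Finset.Icc 1 (n - 1)).sup'
        (Finset.nonempty_Icc.mpr (Nat.one_le_iff_ne_zero.mpr (by omega)))
        (fun i => (a i ⊔ a (i + 1)) ⊓ (b i ⊔ b (i + 1))) ⊓ (b 1 ⊔ b n))

theorem stmt_14 (L : Type*) [Lattice L] (n : ℕ) (hn : 2 ≤ n)
    (h : HigherArguesian L (n + 1) (by omega)) : HigherArguesian L n hn := by
  intro a b
  have H := h (fun i => a (max (i - 1) 1)) (fun i => b (max (i - 1) 1))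
  have hne : (Finset.Icc 1 (n + 1 - 1)).Nonempty := Finset.nonempty_Icc.mpr (by omega)
  have hne' : (Finset.Icc 1 (n - 1)).Nonempty := Finset.nonempty_Icc.mpr (by omega)
  have einf : (Finset.Icc 1 (n + 1 - 1)).inf' hne
      (fun i => a (max (i - 1) 1) ⊔ b (max (i - 1) 1))
      = (Finset.Icc 1 (n - 1)).inf' hne' (fun i => a i ⊔ b i) := by
    apply le_antisymm
    · apply Finset.le_inf'
      intro j hj
      simp only [Finset.mem_Icc] at hj
      have hmem : j + 1 ∈ Finset.Icc 1 (n + 1 - 1) := by simp [Finset.mem_Icc]; omega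
      have := Finset.inf'_le (b := j + 1)
        (f := fun i => a (max (i - 1) 1) ⊔ b (max (i - 1) 1)) hmem
      simpa [Nat.max_eq_left hj.1] using this
    · apply Finset.le_inf'
      intro i hi
      simp only [Finset.mem_Icc] at hi
      have hmem : max (i - 1) 1 ∈ Finset.Icc 1 (n - 1) := by simp [Finset.mem_Icc]; omega
      exact Finset.inf'_le _ hmem
  have esup : (Finset.Icc 1 (n + 1 - 1)).sup' hne
      (fun i => (a (max (i - 1) 1) ⊔ a (max (i + 1 - 1) 1)) ⊓
        (b (max (i - 1) 1) ⊔ b (max (i + 1 - 1) 1)))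
      = (Finset.Icc 1 (n - 1)).sup' hne' (fun i => (a i ⊔ a (i + 1)) ⊓ (b i ⊔ b (i + 1))) := by
    apply le_antisymm
    · apply Finset.sup'_le
      intro i hi
      simp only [Finset.mem_Icc] at hi
      by_cases h1 : i = 1
      · subst h1
        have hmem : 1 ∈ Finset.Icc 1 (n - 1) := by simp [Finset.mem_Icc]; omega
        refine le_trans ?_ (Finset.le_sup' _ hmem)
        exact inf_le_inf (sup_le le_sup_left le_sup_left) (sup_le le_sup_left le_sup_left)
      · have hmem : i - 1 ∈ Finset.Icc 1 (n - 1) := by simp [Finset.mem_Icc]; omega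
        refine le_trans ?_ (Finset.le_sup' _ hmem)
        have e1 : max (i - 1) 1 = i - 1 := Nat.max_eq_left (by omega)
        have e2 : max (i + 1 - 1) 1 = i - 1 + 1 := by omega
        rw [e1, e2]
    · apply Finset.sup'_le
      intro j hj
      simp only [Finset.mem_Icc] at hj
      have hmem : j + 1 ∈ Finset.Icc 1 (n + 1 - 1) := by simp [Finset.mem_Icc]; omega
      refine le_trans ?_ (Finset.le_sup' _ hmem)
      have e1 : max (j + 1 - 1) 1 = j := Nat.max_eq_left (by omega)
      have e2 : max (j + 1 + 1 - 1) 1 = j + 1 := by omega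
      rw [e1, e2]
  simp only [einf, esup] at H
  have e3 : max (n + 1 - 1) 1 = n := by omega
  have e4 : max (1 - 1) 1 = 1 := by omega
  rw [e3, e4] at H
  exact H
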